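/- arXiv:2109.14605 — 4 statements merged into one kernel-verified Lean document; each statement's English description precedes it below -/
import Mathlib

section
/- Fix 0 < q < 1, φ, ψ ∈ ℝ, a sign σ ∈ {1, −1}, and p ∈ ℕ. On ℂ^{p+1} with standard basis e_0, …, e_p define ℂ-linear maps K, K', E, F by: K e_j = q^{j−p/2} exp(−i(4(j−p/2)φ + ψ)) e_j; K' e_j = q^{j−p/2} exp(i(4(j−p/2)φ + ψ)) e_j; F e_j = σ √([p−j]_q [j+1]_q) e_{j+1} for j < p and F e_p = 0; E e_j = σ √([j]_q [p−j+1]_q) e_{j−1} for j > 0 and E e_0 = 0. Then: K and K' are invertible; K K' = K' K; E K = q e^{−4iφ} K E; K F = q e^{−4iφ} F K; E F − F E = (K K' − K⁻¹ K'⁻¹)/(q⁻¹ − q); and with respect to the standard Hermitian inner product on ℂ^{p+1}, K' is the adjoint of K and F is the adjoint of E. (Hence these operators define the finite-dimensional *-representation T_{l,ψ}, l = p/2, of the braided algebra U_{q,φ}(û(2)).) -/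
noncomputable section

/-- The `q`-integer `[n]_q = (qⁿ − q⁻ⁿ)/(q − q⁻¹)`. -/
def qInt (q : ℝ) (n : ℤ) : ℝ := (q ^ n - q ^ (-n)) / (q - q⁻¹)

/-- The eigenvalue of `K` on the basis vector `e_j`:
`q^{j−p/2} exp(−i(4(j−p/2)φ + ψ))`. -/
def kCoef (q φ ψ : ℝ) (p j : ℕ) : ℂ :=
  ((q ^ ((j : ℝ) - (p : ℝ) / 2) : ℝ) : ℂ) *
    Complex.exp (-Complex.I * (4 * ((j : ℝ) - (p : ℝ) / 2) * φ + ψ))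

/-- The eigenvalue of `K' = K†` on the basis vector `e_j`:
`q^{j−p/2} exp(i(4(j−p/2)φ + ψ))`. -/
def kStarCoef (q φ ψ : ℝ) (p j : ℕ) : ℂ :=
  ((q ^ ((j : ℝ) - (p : ℝ) / 2) : ℝ) : ℂ) *
    Complex.exp (Complex.I * (4 * ((j : ℝ) - (p : ℝ) / 2) * φ + ψ))

/-- The coefficient `√([p−j]_q [j+1]_q)` of the raising operator `F`. -/
def fCoef (q : ℝ) (p j : ℕ) : ℝ :=
  Real.sqrt (qInt q ((p : ℤ) - (j : ℤ)) * qInt q ((j : ℤ) + 1))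

/-- The coefficient `√([j]_q [p−j+1]_q)` of the lowering operator `E`. -/
def eCoef (q : ℝ) (p j : ℕ) : ℝ :=
  Real.sqrt (qInt q (j : ℤ) * qInt q ((p : ℤ) - (j : ℤ) + 1))

/-!
All four operators are weighted permutation operators `e_j ↦ a j • e_{τ j}`, where `τ` is the
identity for `K, K'` and the cyclic shift `j ↦ j ± 1` of `Fin (p + 1)` for `F, E`; the
wrap-around of the shift is invisible because the weights vanish there (`[0]_q = 0`). Such
operators compose, combine linearly and take adjoints by explicit rules on weights and
permutations, so every relation reduces to an identity between coefficients: the eigenvalue of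
`K` gains the factor `q e^{-4iφ}` at each step, and the commutator relation is the `q`-integer
identity `[a][b+1] - [a+1][b] = [a-b]` at `a = p - j`, `b = j`.
-/

section WeightedPerm

variable {𝕜 ι : Type*} [RCLike 𝕜] [Fintype ι] [DecidableEq ι]

open EuclideanSpace

theorem EuclideanSpace.linearMap_ext_single {M : Type*} [AddCommMonoid M] [Module 𝕜 M]
    {A B : EuclideanSpace 𝕜 ι →ₗ[𝕜] M} (h : ∀ j, A (single j 1) = B (single j 1)) : A = B :=
  (basisFun ι 𝕜).toBasis.ext fun j => by simpa using h j

def weightedPerm (a : ι → 𝕜) (τ : Equiv.Perm ι) : Module.End 𝕜 (EuclideanSpace 𝕜 ι) :=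
  (basisFun ι 𝕜).toBasis.constr 𝕜 fun j => a j • single (τ j) 1

@[simp]
theorem weightedPerm_single (a : ι → 𝕜) (τ : Equiv.Perm ι) (j : ι) :
    weightedPerm a τ (single j 1) = a j • single (τ j) 1 := by
  simp [weightedPerm]

theorem weightedPerm_mul_weightedPerm (a b : ι → 𝕜) (τ ρ : Equiv.Perm ι) :
    weightedPerm a τ * weightedPerm b ρ = weightedPerm (fun j => b j * a (ρ j)) (τ * ρ) :=
  EuclideanSpace.linearMap_ext_single fun j => by simp [smul_smul]

theorem weightedPerm_one_one : weightedPerm (fun _ => (1 : 𝕜)) (1 : Equiv.Perm ι) = 1 :=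
  EuclideanSpace.linearMap_ext_single fun j => by simp

theorem weightedPerm_mul_weightedPerm_inv {a : ι → 𝕜} (ha : ∀ j, a j ≠ 0) :
    weightedPerm a 1 * weightedPerm (fun j => (a j)⁻¹) 1 = 1 := by
  rw [weightedPerm_mul_weightedPerm, mul_one, ← weightedPerm_one_one]
  congr 1
  funext j
  exact inv_mul_cancel₀ (ha j)

theorem weightedPerm_inv_mul_weightedPerm {a : ι → 𝕜} (ha : ∀ j, a j ≠ 0) :
    weightedPerm (fun j => (a j)⁻¹) 1 * weightedPerm a 1 = 1 := by
  rw [weightedPerm_mul_weightedPerm, mul_one, ← weightedPerm_one_one]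
  congr 1
  funext j
  exact mul_inv_cancel₀ (ha j)

theorem smul_weightedPerm (c : 𝕜) (a : ι → 𝕜) (τ : Equiv.Perm ι) :
    c • weightedPerm a τ = weightedPerm (fun j => c * a j) τ :=
  EuclideanSpace.linearMap_ext_single fun j => by simp [smul_smul]

theorem weightedPerm_sub (a b : ι → 𝕜) (τ : Equiv.Perm ι) :
    weightedPerm a τ - weightedPerm b τ = weightedPerm (fun j => a j - b j) τ :=
  EuclideanSpace.linearMap_ext_single fun j => by simp [sub_smul]

theorem adjoint_weightedPerm (a : ι → 𝕜) (τ : Equiv.Perm ι) :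
    LinearMap.adjoint (weightedPerm a τ) = weightedPerm (fun j => star (a (τ⁻¹ j))) τ⁻¹ := by
  symm
  rw [LinearMap.eq_adjoint_iff_basis (basisFun ι 𝕜).toBasis (basisFun ι 𝕜).toBasis]
  intro i j
  simp [inner_smul_left, inner_smul_right, EuclideanSpace.inner_single_left, Equiv.symm_apply_eq]
  split_ifs with h
  · simp [h]
  · rfl

theorem eq_weightedPerm_addRight_one {n : ℕ}
    {A : Module.End 𝕜 (EuclideanSpace 𝕜 (Fin (n + 1)))} {a : Fin (n + 1) → 𝕜}
    (ha : a (Fin.last n) = 0)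
    (hA : ∀ (j : Fin (n + 1)) (h : (j : ℕ) + 1 < n + 1),
      A (single j 1) = a j • single (⟨(j : ℕ) + 1, h⟩ : Fin (n + 1)) 1)
    (hlast : A (single (Fin.last n) 1) = 0) :
    A = weightedPerm a (Equiv.addRight 1) := by
  refine EuclideanSpace.linearMap_ext_single fun j => ?_
  rcases Fin.eq_castSucc_or_eq_last j with ⟨i, rfl⟩ | rfl
  · have h : (i.castSucc : ℕ) + 1 < n + 1 := by simp
    rw [hA _ h, weightedPerm_single]
    congr 2
    exact Fin.ext (Fin.val_add_one_of_lt' h).symm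
  · simp [hlast, ha]

theorem eq_weightedPerm_addRight_one_inv {n : ℕ}
    {A : Module.End 𝕜 (EuclideanSpace 𝕜 (Fin (n + 1)))} {a : Fin (n + 1) → 𝕜} (ha : a 0 = 0)
    (hA : ∀ j : Fin (n + 1), 0 < (j : ℕ) →
      A (single j 1) = a j •
        single (⟨(j : ℕ) - 1, Nat.lt_of_le_of_lt (Nat.sub_le _ _) j.isLt⟩ : Fin (n + 1)) 1)
    (hzero : A (single 0 1) = 0) :
    A = weightedPerm a (Equiv.addRight 1)⁻¹ := by
  refine EuclideanSpace.linearMap_ext_single fun j => ?_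
  rcases eq_or_ne j 0 with rfl | hj
  · simp [hzero, ha]
  · rw [hA _ (Fin.pos_iff_ne_zero.mpr hj), weightedPerm_single]
    congr 2
    ext
    simp [← sub_eq_add_neg, Fin.val_sub_one_of_ne_zero hj]

end WeightedPerm

section Coefficients

variable {q : ℝ} {p : ℕ}

@[simp]
theorem qInt_zero : qInt q 0 = 0 := by simp [qInt]

theorem qInt_nonneg (hq : 0 < q) {n : ℤ} (hn : 0 ≤ n) : 0 ≤ qInt q n := by
  rcases le_total q 1 with h | h
  · have := zpow_le_zpow_right_of_le_one₀ hq h (by omega : -n ≤ n)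
    exact div_nonneg_of_nonpos (by linarith) (by linarith [(one_le_inv₀ hq).mpr h])
  · have := zpow_le_zpow_right₀ h (by omega : -n ≤ n)
    exact div_nonneg (by linarith) (by linarith [inv_le_one_of_one_le₀ h])

theorem qInt_mul_qInt_add_one_sub (hq : q ≠ 0) (hq' : q - q⁻¹ ≠ 0) (a b : ℤ) :
    qInt q a * qInt q (b + 1) - qInt q (a + 1) * qInt q b = qInt q (a - b) := by
  simp only [qInt]
  rw [div_mul_div_comm, div_mul_div_comm, ← sub_div, div_eq_div_iff (mul_ne_zero hq' hq') hq']
  simp only [zpow_neg, zpow_add_one₀ hq, zpow_sub₀ hq]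
  field_simp
  ring

theorem fCoef_self : fCoef q p p = 0 := by simp [fCoef]

theorem eCoef_zero : eCoef q p 0 = 0 := by simp [eCoef]

theorem eCoef_val_add_one (j : Fin (p + 1)) : eCoef q p ↑(j + 1) = fCoef q p j := by
  rcases Fin.eq_castSucc_or_eq_last j with ⟨i, rfl⟩ | rfl
  · rw [Fin.val_add_one_of_lt' (by simp), eCoef, fCoef, mul_comm]
    push_cast
    ring_nf
  · simp [eCoef_zero, fCoef_self]

theorem fCoef_val_sub_one (j : Fin (p + 1)) : fCoef q p ↑(j - 1) = eCoef q p j := by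
  rcases eq_or_ne j 0 with rfl | hj
  · simp [eCoef_zero, fCoef_self]
  · rw [Fin.val_sub_one_of_ne_zero hj, eCoef, fCoef, mul_comm]
    have : 1 ≤ (j : ℕ) := Fin.pos_iff_ne_zero.mpr hj
    push_cast [this]
    ring_nf

theorem fCoef_sq_sub_eCoef_sq (hq : 0 < q) (hq' : q - q⁻¹ ≠ 0) {j : ℕ} (hj : j ≤ p) :
    fCoef q p j ^ 2 - eCoef q p j ^ 2 = qInt q ((p : ℤ) - 2 * j) := by
  rw [fCoef, eCoef, Real.sq_sqrt, Real.sq_sqrt, mul_comm (qInt q j),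
    show (p : ℤ) - j + 1 = (p - j : ℤ) + 1 by ring, qInt_mul_qInt_add_one_sub hq.ne' hq']
  · ring_nf
  all_goals exact mul_nonneg (qInt_nonneg hq (by omega)) (qInt_nonneg hq (by omega))

end Coefficients

section Representation

variable {q φ ψ : ℝ} {p : ℕ}

theorem kCoef_ne_zero (hq : 0 < q) (j : ℕ) : kCoef q φ ψ p j ≠ 0 :=
  mul_ne_zero (Complex.ofReal_ne_zero.mpr (Real.rpow_pos_of_pos hq _).ne') (Complex.exp_ne_zero _)

theorem kStarCoef_ne_zero (hq : 0 < q) (j : ℕ) : kStarCoef q φ ψ p j ≠ 0 :=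
  mul_ne_zero (Complex.ofReal_ne_zero.mpr (Real.rpow_pos_of_pos hq _).ne') (Complex.exp_ne_zero _)

theorem star_kCoef (j : ℕ) : star (kCoef q φ ψ p j) = kStarCoef q φ ψ p j := by
  rw [kCoef, kStarCoef, star_mul', Complex.star_def, Complex.conj_ofReal,
    ← Complex.exp_conj]
  congr 2
  simp only [map_mul, map_add, map_sub, map_neg, map_div₀, map_ofNat, Complex.conj_I,
    Complex.conj_ofReal]
  ring

theorem kCoef_mul_kStarCoef (hq : 0 < q) (j : ℕ) :
    kCoef q φ ψ p j * kStarCoef q φ ψ p j = ((q ^ (2 * (j : ℤ) - p) : ℝ) : ℂ) := by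
  rw [kCoef, kStarCoef, mul_mul_mul_comm, ← Complex.exp_add, neg_mul, neg_add_cancel,
    Complex.exp_zero, mul_one, ← Complex.ofReal_mul, ← Real.rpow_add hq]
  congr 1
  rw [← Real.rpow_intCast]
  push_cast
  ring_nf

theorem kCoef_succ (hq : 0 < q) (j : ℕ) :
    kCoef q φ ψ p (j + 1) = (q * Complex.exp (-4 * Complex.I * φ)) * kCoef q φ ψ p j := by
  rw [kCoef, kCoef, show ((j + 1 : ℕ) : ℝ) - p / 2 = 1 + (j - p / 2) by push_cast; ring,
    Real.rpow_add hq, Real.rpow_one, mul_mul_mul_comm, ← Complex.exp_add]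
  push_cast
  ring_nf

variable (q φ ψ p) in
def kOp : Module.End ℂ (EuclideanSpace ℂ (Fin (p + 1))) :=
  weightedPerm (fun j => kCoef q φ ψ p j) 1

variable (q φ ψ p) in
def kStarOp : Module.End ℂ (EuclideanSpace ℂ (Fin (p + 1))) :=
  weightedPerm (fun j => kStarCoef q φ ψ p j) 1

variable (q p) in
def eOp (σ : ℝ) : Module.End ℂ (EuclideanSpace ℂ (Fin (p + 1))) :=
  weightedPerm (fun j => ((σ * eCoef q p j : ℝ) : ℂ)) (Equiv.addRight 1)⁻¹

variable (q p) in
def fOp (σ : ℝ) : Module.End ℂ (EuclideanSpace ℂ (Fin (p + 1))) :=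
  weightedPerm (fun j => ((σ * fCoef q p j : ℝ) : ℂ)) (Equiv.addRight 1)

theorem kOp_mul_kStarOp_comm :
    kOp q φ ψ p * kStarOp q φ ψ p = kStarOp q φ ψ p * kOp q φ ψ p := by
  rw [kOp, kStarOp, weightedPerm_mul_weightedPerm, weightedPerm_mul_weightedPerm]
  congr 1
  funext j
  exact mul_comm _ _

theorem adjoint_kOp : LinearMap.adjoint (kOp q φ ψ p) = kStarOp q φ ψ p := by
  simp [kOp, kStarOp, adjoint_weightedPerm, star_kCoef]

theorem adjoint_eOp (σ : ℝ) : LinearMap.adjoint (eOp q p σ) = fOp q p σ := by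
  simp [eOp, fOp, adjoint_weightedPerm, eCoef_val_add_one]

theorem eOp_mul_kOp (hq : 0 < q) (σ : ℝ) :
    eOp q p σ * kOp q φ ψ p =
      ((q : ℂ) * Complex.exp (-4 * Complex.I * φ)) • (kOp q φ ψ p * eOp q p σ) := by
  rw [eOp, kOp, weightedPerm_mul_weightedPerm, weightedPerm_mul_weightedPerm, mul_one, one_mul,
    smul_weightedPerm]
  congr 1
  funext j
  rcases eq_or_ne j 0 with rfl | hj
  · simp [eCoef_zero]
  · have hsucc := kCoef_succ (φ := φ) (ψ := ψ) (p := p) hq (j - 1 : Fin (p + 1))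
    have hj' : (j : ℕ) ≠ 0 := fun h => hj (Fin.ext h)
    rw [Fin.val_sub_one_of_ne_zero hj, Nat.sub_add_cancel (by omega)] at hsucc
    simp only [Equiv.Perm.one_apply, Equiv.Perm.inv_def, Equiv.addRight_symm, Equiv.coe_addRight,
      ← sub_eq_add_neg, Fin.val_sub_one_of_ne_zero hj, hsucc]
    ring

theorem kOp_mul_fOp (hq : 0 < q) (σ : ℝ) :
    kOp q φ ψ p * fOp q p σ =
      ((q : ℂ) * Complex.exp (-4 * Complex.I * φ)) • (fOp q p σ * kOp q φ ψ p) := by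
  rw [fOp, kOp, weightedPerm_mul_weightedPerm, weightedPerm_mul_weightedPerm, mul_one, one_mul,
    smul_weightedPerm]
  congr 1
  funext j
  rcases Fin.eq_castSucc_or_eq_last j with ⟨i, rfl⟩ | rfl
  · have hi : (i.castSucc : ℕ) + 1 < p + 1 := by simp
    simp only [Equiv.Perm.one_apply, Equiv.coe_addRight, Fin.val_add_one_of_lt' hi, kCoef_succ hq]
    ring
  · simp [fCoef_self]

theorem eOp_mul_fOp_sub_fOp_mul_eOp (hq0 : 0 < q) (hq1 : q < 1) {σ : ℝ} (hσ : σ * σ = 1) :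
    eOp q p σ * fOp q p σ - fOp q p σ * eOp q p σ =
      weightedPerm (fun j : Fin (p + 1) => (qInt q ((p : ℤ) - 2 * (j : ℕ)) : ℂ)) 1 := by
  have hq' : q - q⁻¹ ≠ 0 := (sub_neg.mpr (hq1.trans ((one_lt_inv₀ hq0).mpr hq1))).ne
  rw [eOp, fOp, weightedPerm_mul_weightedPerm, weightedPerm_mul_weightedPerm, inv_mul_cancel,
    mul_inv_cancel, weightedPerm_sub]
  congr 1
  funext j
  simp only [Equiv.Perm.inv_def, Equiv.addRight_symm, Equiv.coe_addRight, ← sub_eq_add_neg,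
    eCoef_val_add_one, fCoef_val_sub_one]
  rw [← fCoef_sq_sub_eCoef_sq hq0 hq' (Nat.lt_succ_iff.mp j.isLt)]
  push_cast
  linear_combination (↑(fCoef q p j) ^ 2 - ↑(eCoef q p j) ^ 2 : ℂ) *
    (by exact_mod_cast hσ : (σ : ℂ) * σ = 1)

theorem smul_kOp_mul_kStarOp_sub (hq : 0 < q) :
    ((q : ℂ)⁻¹ - q)⁻¹ • (kOp q φ ψ p * kStarOp q φ ψ p -
      weightedPerm (fun j : Fin (p + 1) => (kCoef q φ ψ p j)⁻¹) 1 *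
        weightedPerm (fun j : Fin (p + 1) => (kStarCoef q φ ψ p j)⁻¹) 1) =
      weightedPerm (fun j : Fin (p + 1) => (qInt q ((p : ℤ) - 2 * (j : ℕ)) : ℂ)) 1 := by
  rw [kOp, kStarOp, weightedPerm_mul_weightedPerm, weightedPerm_mul_weightedPerm,
    weightedPerm_sub, smul_weightedPerm]
  congr 1
  funext j
  simp only [Equiv.Perm.one_apply, mul_comm (kStarCoef q φ ψ p j), ← mul_inv,
    kCoef_mul_kStarCoef hq]
  rw [qInt, show (p : ℤ) - 2 * (j : ℕ) = -(2 * (j : ℕ) - p) by ring, neg_neg, zpow_neg,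
    show (q : ℂ)⁻¹ - q = -((q - q⁻¹ : ℝ) : ℂ) by push_cast; ring, inv_neg]
  push_cast
  ring

end Representation

/-- The operators `K, K', E, F` of the representation `T_{l,ψ}`, `l = p/2`, of the braided
algebra `U_{q,φ}(û(2))` on `ℂ^{p+1}` satisfy its defining relations: `K, K'` are
invertible and commute, `EK = q e^{−4iφ} KE`, `KF = q e^{−4iφ} FK`,
`EF − FE = (KK' − K⁻¹K'⁻¹)/(q⁻¹ − q)`, and with respect to the standard Hermitian inner
product `K'` is the adjoint of `K` and `F` is the adjoint of `E`. -/
theorem uqu2_representation_relations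
    (q φ ψ : ℝ) (hq0 : 0 < q) (hq1 : q < 1) (σ : ℝ) (hσ : σ = 1 ∨ σ = -1) (p : ℕ)
    (K K' E F : Module.End ℂ (EuclideanSpace ℂ (Fin (p + 1))))
    (hK : ∀ j : Fin (p + 1),
      K (EuclideanSpace.single j 1) = kCoef q φ ψ p j • EuclideanSpace.single j 1)
    (hK' : ∀ j : Fin (p + 1),
      K' (EuclideanSpace.single j 1) = kStarCoef q φ ψ p j • EuclideanSpace.single j 1)
    (hF : ∀ (j : Fin (p + 1)) (h : (j : ℕ) + 1 < p + 1),
      F (EuclideanSpace.single j 1) =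
        ((σ * fCoef q p j : ℝ) : ℂ) • EuclideanSpace.single (⟨(j : ℕ) + 1, h⟩ : Fin (p + 1)) 1)
    (hFlast : F (EuclideanSpace.single (Fin.last p) 1) = 0)
    (hE : ∀ (j : Fin (p + 1)) (h : 0 < (j : ℕ)),
      E (EuclideanSpace.single j 1) =
        ((σ * eCoef q p j : ℝ) : ℂ) •
          EuclideanSpace.single
            (⟨(j : ℕ) - 1, Nat.lt_of_le_of_lt (Nat.sub_le _ _) j.isLt⟩ : Fin (p + 1)) 1)
    (hE0 : E (EuclideanSpace.single (0 : Fin (p + 1)) 1) = 0) :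
    (∃ Kinv K'inv : Module.End ℂ (EuclideanSpace ℂ (Fin (p + 1))),
      K * Kinv = 1 ∧ Kinv * K = 1 ∧ K' * K'inv = 1 ∧ K'inv * K' = 1 ∧
      E * F - F * E = ((q : ℂ)⁻¹ - (q : ℂ))⁻¹ • (K * K' - Kinv * K'inv)) ∧
    K * K' = K' * K ∧
    E * K = ((q : ℂ) * Complex.exp (-4 * Complex.I * (φ : ℂ))) • (K * E) ∧
    K * F = ((q : ℂ) * Complex.exp (-4 * Complex.I * (φ : ℂ))) • (F * K) ∧
    LinearMap.adjoint K = K' ∧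
    LinearMap.adjoint E = F := by
  have hσ2 : σ * σ = 1 := by rcases hσ with rfl | rfl <;> norm_num
  obtain rfl : K = kOp q φ ψ p :=
    EuclideanSpace.linearMap_ext_single fun j => by simp [kOp, hK]
  obtain rfl : K' = kStarOp q φ ψ p :=
    EuclideanSpace.linearMap_ext_single fun j => by simp [kStarOp, hK']
  obtain rfl : E = eOp q p σ := eq_weightedPerm_addRight_one_inv (by simp [eCoef_zero]) hE hE0
  obtain rfl : F = fOp q p σ := eq_weightedPerm_addRight_one (by simp [fCoef_self]) hF hFlast
  have hk (j : Fin (p + 1)) := kCoef_ne_zero (φ := φ) (ψ := ψ) (p := p) hq0 j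
  have hk' (j : Fin (p + 1)) := kStarCoef_ne_zero (φ := φ) (ψ := ψ) (p := p) hq0 j
  refine ⟨⟨_, _, weightedPerm_mul_weightedPerm_inv hk, weightedPerm_inv_mul_weightedPerm hk,
    weightedPerm_mul_weightedPerm_inv hk', weightedPerm_inv_mul_weightedPerm hk', ?_⟩,
    kOp_mul_kStarOp_comm, eOp_mul_kOp hq0 σ, kOp_mul_fOp hq0 σ, adjoint_kOp, adjoint_eOp σ⟩
  rw [eOp_mul_fOp_sub_fOp_mul_eOp hq0 hq1 hσ2, smul_kOp_mul_kStarOp_sub hq0]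
end
end

section
/- Let 0 < q < 1 and ψ ∈ ℝ, let V be a complex normed vector space, and let X₁, X₀, X₋₁ be bounded (continuous) linear operators on V satisfying the relations X₁ X₀ = q⁻² e^{−2iψ} X₀ X₁, X₋₁ X₀ = q² e^{2iψ} X₀ X₋₁, X₁ X₋₁ = −q⁻² e^{−2iψ} X₀ X₀, and X₋₁ X₁ = −q² e^{2iψ} X₀ X₀. Then X₀ has no eigenvector with nonzero eigenvalue: if X₀ v = λ v for some v ≠ 0 and λ ∈ ℂ, then λ = 0. (Hence the ψ ≠ 0 family of quadratic algebras admits no bounded representation in which X₀ has a nonzero eigenvalue.) -/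
/-!
Let `d = q² e^{2iψ}`. The relation `X₋₁ X₀ = d X₀ X₋₁` makes `X₋₁` a ladder operator for `X₀`:
it sends an eigenvector with eigenvalue `μ` to a vector `w` with `X₀ w = d⁻¹ μ w`, and the relation
`X₁ X₋₁ = e X₀²` with `e ≠ 0` forces `w ≠ 0` as long as `μ ≠ 0`. Starting from `X₀ v = λ v` with
`λ ≠ 0`, the vectors `X₋₁ⁿ v` are eigenvectors with eigenvalues `d⁻ⁿ λ`, whose moduli `q⁻²ⁿ |λ|`
are unbounded; but every eigenvalue of a bounded operator is bounded by its norm.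
-/

section Ladder

variable {𝕜 V : Type*} [Field 𝕜] [AddCommGroup V] [Module 𝕜 V] [TopologicalSpace V]
  [ContinuousConstSMul 𝕜 V] {R S T : V →L[𝕜] V} {d e μ : 𝕜} {v w : V}

theorem apply_apply_eq_smul_of_mul_eq_smul_mul (hd : d ≠ 0) (hST : S * T = d • (T * S))
    (h : T w = μ • w) : T (S w) = (d⁻¹ * μ) • S w := by
  have hw : μ • S w = d • T (S w) := by
    simpa only [mul_apply_eq_comp, smul_apply, h, map_smul] using congr($hST w)
  rw [mul_smul, hw, smul_smul, inv_mul_cancel₀ hd, one_smul]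

theorem apply_ne_zero_of_mul_eq_smul_mul_self (he : e ≠ 0) (hRS : R * S = e • (T * T))
    (hμ : μ ≠ 0) (hw : w ≠ 0) (h : T w = μ • w) : S w ≠ 0 := by
  intro hSw
  have hzero : (e * (μ * μ)) • w = 0 := by
    simpa only [mul_apply_eq_comp, smul_apply, hSw, map_zero, h, map_smul, smul_smul] using
      (congr($hRS w)).symm
  exact hw ((smul_eq_zero.mp hzero).resolve_left (by simp [he, hμ]))

theorem apply_pow_apply_eq_smul (hd : d ≠ 0) (he : e ≠ 0) (hST : S * T = d • (T * S))
    (hRS : R * S = e • (T * T)) (hμ : μ ≠ 0) (hv : v ≠ 0) (h : T v = μ • v) (n : ℕ) :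
    T ((S ^ n) v) = (d⁻¹ ^ n * μ) • (S ^ n) v ∧ (S ^ n) v ≠ 0 := by
  induction n with
  | zero => simpa using ⟨h, hv⟩
  | succ n ih =>
    obtain ⟨heigen, hne⟩ := ih
    rw [pow_succ', mul_apply_eq_comp, pow_succ', mul_assoc]
    exact ⟨apply_apply_eq_smul_of_mul_eq_smul_mul hd hST heigen,
      apply_ne_zero_of_mul_eq_smul_mul_self he hRS (by simp [hd, hμ]) hne heigen⟩

end Ladder

section Bounded

variable {𝕜 V : Type*} [NontriviallyNormedField 𝕜] [NormedAddCommGroup V] [NormedSpace 𝕜 V]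
  {R S T : V →L[𝕜] V} {d e μ : 𝕜} {v w : V}

theorem norm_le_opNorm_of_apply_eq_smul (hw : w ≠ 0) (h : T w = μ • w) : ‖μ‖ ≤ ‖T‖ := by
  have hle := T.le_opNorm w
  rw [h, norm_smul] at hle
  exact le_of_mul_le_mul_right hle (norm_pos_iff.mpr hw)

theorem eq_zero_of_apply_eq_smul_of_ladder (hd : d ≠ 0) (hd1 : ‖d‖ < 1) (he : e ≠ 0)
    (hST : S * T = d • (T * S)) (hRS : R * S = e • (T * T)) (hv : v ≠ 0) (h : T v = μ • v) :
    μ = 0 := by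
  by_contra hμ
  have hbound (n : ℕ) : ‖d⁻¹‖ ^ n ≤ ‖T‖ / ‖μ‖ := by
    obtain ⟨heigen, hne⟩ := apply_pow_apply_eq_smul hd he hST hRS hμ hv h n
    rw [le_div_iff₀ (norm_pos_iff.mpr hμ), ← norm_pow, ← norm_mul]
    exact norm_le_opNorm_of_apply_eq_smul hne heigen
  have hd_inv : 1 < ‖d⁻¹‖ := by
    rw [norm_inv]
    exact one_lt_inv₀ (norm_pos_iff.mpr hd) |>.mpr hd1
  obtain ⟨n, hn⟩ := pow_unbounded_of_one_lt (‖T‖ / ‖μ‖) hd_inv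
  exact (hbound n).not_gt hn

end Bounded

theorem no_bounded_representation_with_nonzero_eigenvalue_general
    (q ψ : ℝ) (hq0 : 0 < q) (hq1 : q < 1)
    {V : Type*} [NormedAddCommGroup V] [NormedSpace ℂ V]
    (Xpos Xzero Xneg : V →L[ℂ] V)
    (h2 : Xneg * Xzero = ((q : ℂ) ^ 2 * Complex.exp (2 * Complex.I * (ψ : ℂ))) • (Xzero * Xneg))
    (h3 : Xpos * Xneg = -(((q : ℂ) ^ 2)⁻¹ * Complex.exp (-2 * Complex.I * (ψ : ℂ))) • (Xzero * Xzero)) :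
    ∀ (v : V) (lam : ℂ), v ≠ 0 → Xzero v = lam • v → lam = 0 := by
  intro v lam hv h
  have hq : (q : ℂ) ≠ 0 := mod_cast hq0.ne'
  have hnorm : ‖(q : ℂ) ^ 2 * Complex.exp (2 * Complex.I * (ψ : ℂ))‖ = q ^ 2 := by
    simp [Complex.norm_exp]
  exact eq_zero_of_apply_eq_smul_of_ladder (by simp [hq, Complex.exp_ne_zero])
    (hnorm ▸ pow_lt_one₀ hq0.le hq1 two_ne_zero) (by simp [hq, Complex.exp_ne_zero]) h2 h3 hv h

/-- For `0 < q < 1`, bounded operators `Xpos, Xzero, Xneg` on a complex normed space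
satisfying the quadratic-algebra relations
`XposXzero = q⁻²e^{−2iψ} XzeroXpos`, `XnegXzero = q²e^{2iψ} XzeroXneg`,
`XposXneg = −q⁻²e^{−2iψ} XzeroXzero`, `XnegXpos = −q²e^{2iψ} XzeroXzero`
admit no eigenvector of `Xzero` with nonzero eigenvalue. -/
theorem no_bounded_representation_with_nonzero_eigenvalue
    (q ψ : ℝ) (hq0 : 0 < q) (hq1 : q < 1)
    {V : Type*} [NormedAddCommGroup V] [NormedSpace ℂ V]
    (Xpos Xzero Xneg : V →L[ℂ] V)
    (h1 : Xpos * Xzero = (((q : ℂ) ^ 2)⁻¹ * Complex.exp (-2 * Complex.I * (ψ : ℂ))) • (Xzero * Xpos))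
    (h2 : Xneg * Xzero = ((q : ℂ) ^ 2 * Complex.exp (2 * Complex.I * (ψ : ℂ))) • (Xzero * Xneg))
    (h3 : Xpos * Xneg = -(((q : ℂ) ^ 2)⁻¹ * Complex.exp (-2 * Complex.I * (ψ : ℂ))) • (Xzero * Xzero))
    (h4 : Xneg * Xpos = -((q : ℂ) ^ 2 * Complex.exp (2 * Complex.I * (ψ : ℂ))) • (Xzero * Xzero)) :
    ∀ (v : V) (lam : ℂ), v ≠ 0 → Xzero v = lam • v → lam = 0 :=
  no_bounded_representation_with_nonzero_eigenvalue_general q ψ hq0 hq1 Xpos Xzero Xneg h2 h3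
end

section
/- Let k be a field, H a bialgebra over k with comultiplication Δ : H → H ⊗ H, and A a (not necessarily commutative) unital k-algebra. Let act : H →ₗ[k] A →ₗ[k] A (written h ⊳ a) and Ξ : H ⊗[k] A →ₗ[k] A ⊗[k] H be linear maps satisfying the braided module-algebra law: for all h ∈ H and a, b ∈ A, h ⊳ (a·b) equals the result of applying multiplication ∘ (act ⊗ act) ∘ (id_H ⊗ Ξ ⊗ id_A) ∘ (Δ ⊗ id_A ⊗ id_A) to h ⊗ a ⊗ b (i.e., writing Δh = Σ h₍₁₎ ⊗ h₍₂₎ and Ξ(h₍₂₎ ⊗ a) = Σ a' ⊗ h₍₂₎', one has h ⊳ (ab) = Σ (h₍₁₎ ⊳ a')·(h₍₂₎' ⊳ b)). Suppose x, h₁, h₂ ∈ H satisfy Δ x = x ⊗ h₁ + h₂ ⊗ x (x is quasi-primitive). Set A_x := {a ∈ A : x ⊳ a = 0}. Assume: (1) for every a ∈ A_x there exists ã ∈ A with Ξ(x ⊗ a) = ã ⊗ x; and (2) for every a ∈ A_x, Ξ(h₁ ⊗ a) lies in the image of A_x ⊗ H inside A ⊗ H. Then A_x is closed under multiplication: a,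 b ∈ A_x implies a·b ∈ A_x. -/
/-!
Expand `x ⊳ (a b)` with the braided module-algebra law and `Δx = x ⊗ h₁ + h₂ ⊗ x`. The
`h₂ ⊗ x` summand braids `x` past `a` unchanged, so it ends in `x ⊳ b = 0`; the `x ⊗ h₁` summand
braids `h₁` past `a` into `A_x ⊗ H`, so every term starts with `x ⊳ a' = 0` for some `a' ∈ A_x`.
-/

open scoped TensorProduct

noncomputable section

variable {k : Type*} [Field k]
variable {H : Type*} [Ring H] [Bialgebra k H]
variable {A : Type*} [Ring A] [Algebra k A]

/-- The braided module-algebra composite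
`μ_A ∘ (act ⊗ act) ∘ (id_H ⊗ Ξ ⊗ id_A) ∘ (Δ_H ⊗ id_A ⊗ id_A) : H ⊗ (A ⊗ A) → A`. -/
def braidedProductAction (act : H →ₗ[k] A →ₗ[k] A) (Ξ : H ⊗[k] A →ₗ[k] A ⊗[k] H) :
    H ⊗[k] (A ⊗[k] A) →ₗ[k] A :=
  LinearMap.mul' k A ∘ₗ
    TensorProduct.map (TensorProduct.lift act) (TensorProduct.lift act) ∘ₗ
    (TensorProduct.assoc k H A (H ⊗[k] A)).symm.toLinearMap ∘ₗ
    LinearMap.lTensor H ((TensorProduct.assoc k A H A).toLinearMap) ∘ₗ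
    LinearMap.lTensor H (LinearMap.rTensor A Ξ) ∘ₗ
    LinearMap.lTensor H ((TensorProduct.assoc k H A A).symm.toLinearMap) ∘ₗ
    (TensorProduct.assoc k H H (A ⊗[k] A)).toLinearMap ∘ₗ
    LinearMap.rTensor (A ⊗[k] A) (Coalgebra.comul (R := k) (A := H))

section

variable (act : H →ₗ[k] A →ₗ[k] A)

/-- The braided law sends the summand `h ⊗ h'` of `Δ` to `actMulAct act h b (Ξ (h' ⊗ a))`. -/
def actMulAct (h : H) (b : A) : A ⊗[k] H →ₗ[k] A :=
  LinearMap.mul' k A ∘ₗ TensorProduct.map (act h) (act.flip b)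

@[simp]
theorem actMulAct_tmul (h : H) (b a : A) (g : H) :
    actMulAct act h b (a ⊗ₜ[k] g) = act h a * act g b := rfl

theorem actMulAct_eq_zero_of_mem_range_map_ker {h : H} (b : A) {t : A ⊗[k] H}
    (ht : t ∈ LinearMap.range
      (TensorProduct.map (LinearMap.ker (act h)).subtype (LinearMap.id : H →ₗ[k] H))) :
    actMulAct act h b t = 0 := by
  refine LinearMap.range_le_ker_iff.mpr ?_ ht
  ext ⟨a, ha⟩ g
  simp [LinearMap.mem_ker.mp ha]

variable (Ξ : H ⊗[k] A →ₗ[k] A ⊗[k] H)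

theorem braidedProductAction_tmul_eq_sum {ι : Type*} {h : H} (a b : A)
    (ℛ : Coalgebra.Repr k h ι) :
    braidedProductAction act Ξ (h ⊗ₜ[k] (a ⊗ₜ[k] b)) =
      ∑ i ∈ ℛ.index, actMulAct act (ℛ.left i) b (Ξ (ℛ.right i ⊗ₜ[k] a)) := by
  have hsummand (l : H) :
      LinearMap.mul' k A ∘ₗ
        TensorProduct.map (TensorProduct.lift act) (TensorProduct.lift act) ∘ₗ
        (TensorProduct.assoc k H A (H ⊗[k] A)).symm.toLinearMap ∘ₗ
        TensorProduct.mk k H (A ⊗[k] (H ⊗[k] A)) l ∘ₗ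
        (TensorProduct.assoc k A H A).toLinearMap ∘ₗ
        (TensorProduct.mk k (A ⊗[k] H) A).flip b =
        actMulAct act l b := by
    ext a' g
    simp
  simp only [braidedProductAction, LinearMap.comp_apply, LinearEquiv.coe_coe,
    LinearMap.rTensor_tmul, ← ℛ.eq, TensorProduct.sum_tmul, map_sum]
  refine Finset.sum_congr rfl fun i _ => ?_
  simpa using LinearMap.congr_fun (hsummand (ℛ.left i)) (Ξ (ℛ.right i ⊗ₜ[k] a))

theorem braidedProductAction_tmul_of_comul_eq_add {h l₁ r₁ l₂ r₂ : H} (a b : A)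
    (hcomul : Coalgebra.comul (R := k) h = l₁ ⊗ₜ[k] r₁ + l₂ ⊗ₜ[k] r₂) :
    braidedProductAction act Ξ (h ⊗ₜ[k] (a ⊗ₜ[k] b)) =
      actMulAct act l₁ b (Ξ (r₁ ⊗ₜ[k] a)) + actMulAct act l₂ b (Ξ (r₂ ⊗ₜ[k] a)) := by
  simpa using braidedProductAction_tmul_eq_sum act Ξ a b
    { index := Finset.univ, left := ![l₁, l₂], right := ![r₁, r₂]
      eq := by simp [hcomul] }

end

/-- If `x` is quasi-primitive, `Δx = x ⊗ h₁ + h₂ ⊗ x`, the action satisfies the braided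
module-algebra law, and the braiding `Ξ` maps `x ⊗ A_x` into `A ⊗ x` and `h₁ ⊗ A_x` into
`A_x ⊗ H`, then the kernel `A_x = {a : x ⊳ a = 0}` of the action of `x` is closed under
multiplication. -/
theorem kernel_of_quasiPrimitive_action_mul_closed
    (act : H →ₗ[k] A →ₗ[k] A) (Ξ : H ⊗[k] A →ₗ[k] A ⊗[k] H)
    (hlaw : ∀ (h : H) (a b : A),
      act h (a * b) = braidedProductAction act Ξ (h ⊗ₜ[k] (a ⊗ₜ[k] b)))
    (x h₁ h₂ : H)
    (hx : Coalgebra.comul (R := k) x = x ⊗ₜ[k] h₁ + h₂ ⊗ₜ[k] x)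
    (hbr₁ : ∀ a : A, act x a = 0 → ∃ a' : A, Ξ (x ⊗ₜ[k] a) = a' ⊗ₜ[k] x)
    (hbr₂ : ∀ a : A, act x a = 0 →
      Ξ (h₁ ⊗ₜ[k] a) ∈ LinearMap.range
        (TensorProduct.map (LinearMap.ker (act x)).subtype (LinearMap.id : H →ₗ[k] H))) :
    ∀ a b : A, act x a = 0 → act x b = 0 → act x (a * b) = 0 := by
  intro a b ha hb
  obtain ⟨a', ha'⟩ := hbr₁ a ha
  rw [hlaw, braidedProductAction_tmul_of_comul_eq_add act Ξ a b hx, ha', actMulAct_tmul, hb,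
    mul_zero, add_zero]
  exact actMulAct_eq_zero_of_mem_range_map_ker act b (hbr₂ a ha)
end
end

section
/- Let ϕ ∈ ℝ and let F : ℤ × ℤ → ℂ be a function with F(m,n) ≠ 0 for all m, n, satisfying the two functional equations: (1) F(g + h, a) = F(h, g + a) · F(g, a) · exp(2iϕ·h·g) for all g, h, a ∈ ℤ; and (2) F(h₁ + h₂, a + b) = F(h₁, a) · F(h₂, b) · exp(−2iϕ·h₂·a) · exp(−2iϕ·h₁·b) for all h₁, h₂, a, b ∈ ℤ. Then F(m, n) = F(1,0)^m · exp(−2iϕ·m·n) for all m, n ∈ ℤ. In particular, if additionally F(m, 0) = 1 for all m ∈ ℤ, then F(m, n) = exp(−2iϕ·m·n). -/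
/-!
Specialising `h = 0` in (1) shows `F(0, a) = 1`. Then (2) with `(h₁, h₂, a, b) = (m, 0, 0, n)`
splits off the phase, `F(m, n) = F(m, 0) e^{−2iϕmn}`, and with `a = b = 0` it makes
`m ↦ F(m, 0)` a nowhere-vanishing multiplicative map on `ℤ`, hence `F(m, 0) = F(1, 0)^m`.
-/

theorem eq_zpow_of_map_add {G₀ : Type*} [GroupWithZero G₀] {f : ℤ → G₀}
    (hf : ∀ p q, f (p + q) = f p * f q) (h0 : f 0 = 1) (h1 : f 1 ≠ 0) (n : ℤ) :
    f n = f 1 ^ n := by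
  induction n using Int.induction_on with
  | zero => rw [h0, zpow_zero]
  | succ k ih => rw [hf, ih, zpow_add_one₀ h1]
  | pred k ih =>
    have hsplit : f (-k) = f (-k - 1) * f 1 := by rw [← hf, sub_add_cancel]
    rw [zpow_sub_one₀ h1, ← ih, hsplit, mul_inv_cancel_right₀ h1]

section PhaseFactor

variable {ϕ : ℝ} {F : ℤ × ℤ → ℂ}

theorem phase_zero_left (hF : ∀ m n : ℤ, F (m, n) ≠ 0)
    (h1 : ∀ g h a : ℤ, F (g + h, a) =
      F (h, g + a) * F (g, a) * Complex.exp (2 * Complex.I * (ϕ : ℂ) * (h : ℂ) * (g : ℂ)))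
    (a : ℤ) : F (0, a) = 1 := by
  have h := h1 a 0 0
  simp only [add_zero, Int.cast_zero, mul_zero, zero_mul, Complex.exp_zero, mul_one] at h
  exact (mul_eq_right₀ (hF a 0)).mp h.symm

variable (h2 : ∀ h₁ h₂ a b : ℤ, F (h₁ + h₂, a + b) =
      F (h₁, a) * F (h₂, b) *
        Complex.exp (-2 * Complex.I * (ϕ : ℂ) * (h₂ : ℂ) * (a : ℂ)) *
        Complex.exp (-2 * Complex.I * (ϕ : ℂ) * (h₁ : ℂ) * (b : ℂ)))
include h2

theorem phase_eq_mul_exp (hzero : ∀ a : ℤ, F (0, a) = 1) (m n : ℤ) :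
    F (m, n) = F (m, 0) * Complex.exp (-2 * Complex.I * (ϕ : ℂ) * (m : ℂ) * (n : ℂ)) := by
  simpa [hzero] using h2 m 0 0 n

theorem phase_add_left (p q : ℤ) : F (p + q, 0) = F (p, 0) * F (q, 0) := by
  simpa using h2 p q 0 0

end PhaseFactor

/-- The solution of the functional equations for the phase factor of the star structure
on `H ⊗ A` for a braided Hopf algebra obtained from twisting: any nowhere-vanishing
`F : ℤ × ℤ → ℂ` satisfying
`F(g+h, a) = F(h, g+a) F(g, a) e^{2iϕhg}` and
`F(h₁+h₂, a+b) = F(h₁,a) F(h₂,b) e^{−2iϕh₂a} e^{−2iϕh₁b}`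
is of the form `F(m,n) = F(1,0)^m e^{−2iϕmn}`; in particular if `F(m,0) = 1` for all `m`
then `F(m,n) = e^{−2iϕmn}`. -/
theorem star_phase_factor_eq_exp
    (ϕ : ℝ) (F : ℤ × ℤ → ℂ) (hF : ∀ m n : ℤ, F (m, n) ≠ 0)
    (h1 : ∀ g h a : ℤ, F (g + h, a) =
      F (h, g + a) * F (g, a) *
        Complex.exp (2 * Complex.I * (ϕ : ℂ) * (h : ℂ) * (g : ℂ)))
    (h2 : ∀ h₁ h₂ a b : ℤ, F (h₁ + h₂, a + b) =
      F (h₁, a) * F (h₂, b) *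
        Complex.exp (-2 * Complex.I * (ϕ : ℂ) * (h₂ : ℂ) * (a : ℂ)) *
        Complex.exp (-2 * Complex.I * (ϕ : ℂ) * (h₁ : ℂ) * (b : ℂ))) :
    (∀ m n : ℤ, F (m, n) =
      F (1, 0) ^ m * Complex.exp (-2 * Complex.I * (ϕ : ℂ) * (m : ℂ) * (n : ℂ))) ∧
    ((∀ m : ℤ, F (m, 0) = 1) → ∀ m n : ℤ,
      F (m, n) = Complex.exp (-2 * Complex.I * (ϕ : ℂ) * (m : ℂ) * (n : ℂ))) := by
  have hzero := phase_zero_left hF h1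
  have hpow : ∀ m : ℤ, F (m, 0) = F (1, 0) ^ m :=
    eq_zpow_of_map_add (f := fun m ↦ F (m, 0)) (phase_add_left h2) (hzero 0) (hF 1 0)
  refine ⟨fun m n ↦ ?_, fun hone m n ↦ ?_⟩
  · rw [phase_eq_mul_exp h2 hzero, hpow]
  · rw [phase_eq_mul_exp h2 hzero, hone, one_mul]
end
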